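/- Let H be a Hopf algebra with bijective antipode over a field k, B ⊆ H a Hopf subalgebra, and Ξ the restriction to B of a finite-dimensional left H-module. Then S(Ξ) := {ζ ∈ Ξ ⊗ H* : (id ⊗ L_b)ζ = (S(b) ⊗ id)ζ for all b ∈ B} is a free left module of rank dim Ξ over the convolution algebra A^B := {f ∈ H* : f(S(b)y) = ε(b)f(y) for all b ∈ B, y ∈ H}; explicitly, the map κ(v ⊗ f) = Σ v₍₀₎ ⊗ f * S⁻¹(v₍₁₎) restricts to an A^B-module isomorphism S(Ξ) ≅ Ξ ⊗ A^B. -/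

import Mathlib

open TensorProduct

noncomputable section

variable {k H V ι : Type*} [Field k] [Ring H] [HopfAlgebra k H]
  [AddCommGroup V] [Module k V] [Module H V] [IsScalarTower k H V] [SMulCommClass k H V]
  [Fintype ι]

/-- The convolution product on `H*`: `(f * g)(x) = Σ f(x₍₁₎) g(x₍₂₎)`. -/
def conv (f g : H →ₗ[k] k) : H →ₗ[k] k :=
  LinearMap.mul' k k ∘ₗ TensorProduct.map f g ∘ₗ Coalgebra.comul

lemma conv_add_left (f f' g : H →ₗ[k] k) : conv (f + f') g = conv f g + conv f' g := by
  unfold conv; rw [TensorProduct.map_add_left, LinearMap.add_comp, LinearMap.comp_add]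

lemma conv_smul_left (c : k) (f g : H →ₗ[k] k) : conv (c • f) g = c • conv f g := by
  unfold conv; rw [TensorProduct.map_smul_left, LinearMap.smul_comp, LinearMap.comp_smul]

lemma conv_add_right (f g g' : H →ₗ[k] k) : conv f (g + g') = conv f g + conv f g' := by
  unfold conv; rw [TensorProduct.map_add_right, LinearMap.add_comp, LinearMap.comp_add]

lemma conv_smul_right (c : k) (f g : H →ₗ[k] k) : conv f (c • g) = c • conv f g := by
  unfold conv; rw [TensorProduct.map_smul_right, LinearMap.smul_comp, LinearMap.comp_smul]

/-- Left convolution by `f`, as a linear endomorphism `a ↦ f * a` of `H*`. -/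
def convL (f : H →ₗ[k] k) : (H →ₗ[k] k) →ₗ[k] (H →ₗ[k] k) where
  toFun a := conv f a
  map_add' a a' := by simp only [conv_add_right]
  map_smul' c a := by simp only [conv_smul_right, RingHom.id_apply]

/-- Left translation `L_b : f ↦ (y ↦ f (S(b) y))` as a linear endomorphism of `H*`. -/
def Ltrans (x : H) : (H →ₗ[k] k) →ₗ[k] (H →ₗ[k] k) where
  toFun f := f ∘ₗ LinearMap.mulLeft k (HopfAlgebra.antipode (R := k) x)
  map_add' f g := LinearMap.add_comp _ _ _
  map_smul' c f := LinearMap.smul_comp _ _ _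

/-- The action of `x ∈ H` on `V` as a `k`-linear endomorphism. -/
def actV (x : H) : V →ₗ[k] V where
  toFun v := x • v
  map_add' v w := smul_add x v w
  map_smul' c v := smul_comm x c v

/-- The matrix coefficient functional `v ↦ (x ↦ (x • v)ᵢ)` of the `H`-module `V` with
respect to the basis `b`. -/
def coeffL (b : Module.Basis ι k V) (i : ι) : V →ₗ[k] (H →ₗ[k] k) where
  toFun v :=
    { toFun := fun x => b.repr (x • v) i
      map_add' := fun x y => by simp [add_smul]
      map_smul' := fun c x => by simp [smul_assoc] }
  map_add' v w := by ext x; simp [smul_add]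
  map_smul' c v := by ext x; simp [smul_comm x c v]

/-- The coaction `δ : V → V ⊗ H*`, `δ(v) = Σ v₍₀₎ ⊗ v₍₁₎`. -/
def coact (b : Module.Basis ι k V) : V →ₗ[k] V ⊗[k] (H →ₗ[k] k) :=
  ∑ i : ι, (TensorProduct.mk k V (H →ₗ[k] k) (b i)) ∘ₗ coeffL b i

/-- The bilinear map `(g, f) ↦ f * (g ∘ S⁻¹)` on `H*`. -/
def convBilS (Sinv : H →ₗ[k] H) : (H →ₗ[k] k) →ₗ[k] (H →ₗ[k] k) →ₗ[k] (H →ₗ[k] k) :=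
  LinearMap.mk₂ k (fun g f => conv f (g ∘ₗ Sinv))
    (fun g g' f => by simp only [LinearMap.add_comp, conv_add_right])
    (fun c g f => by simp only [LinearMap.smul_comp, conv_smul_right])
    (fun g f f' => by simp only [conv_add_left])
    (fun g c f => by simp only [conv_smul_left])

/-- The map `κ : V ⊗ H* → V ⊗ H*`, `κ(v ⊗ f) = Σ v₍₀₎ ⊗ f * (S⁻¹)ᵗ(v₍₁₎)`. -/
def kap (b : Module.Basis ι k V) (Sinv : H →ₗ[k] H) :
    V ⊗[k] (H →ₗ[k] k) →ₗ[k] V ⊗[k] (H →ₗ[k] k) :=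
  (TensorProduct.map LinearMap.id (TensorProduct.lift (convBilS Sinv))) ∘ₗ
    (TensorProduct.assoc k V (H →ₗ[k] k) (H →ₗ[k] k)).toLinearMap ∘ₗ
    (TensorProduct.map (coact b) LinearMap.id)

variable (B : Subalgebra k H)

/-- The subspace `A^B = {f ∈ H* : f(S(b)y) = ε(b) f(y) for all b ∈ B, y ∈ H}` of
`B`-left-invariant functionals, as a `k`-submodule of `H*`. -/
def ABsub : Submodule k (H →ₗ[k] k) where
  carrier := {f | ∀ b ∈ B, ∀ y : H,
    f (HopfAlgebra.antipode (R := k) b * y) = Coalgebra.counit (R := k) b * f y}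
  add_mem' := fun {f g} hf hg b hb y => by
    simp only [LinearMap.add_apply, hf b hb y, hg b hb y, mul_add]
  zero_mem' := fun b hb y => by simp
  smul_mem' := fun c f hf b hb y => by
    simp only [LinearMap.smul_apply, hf b hb y, smul_eq_mul]; ring

/-- The space of sections `S(Ξ) = {ζ ∈ V ⊗ H* : (id ⊗ L_b)ζ = (S(b) ⊗ id)ζ ∀ b ∈ B}`,
where `Ξ` is the restriction of the `H`-module `V` to `B`. -/
def SXi : Set (V ⊗[k] (H →ₗ[k] k)) :=
  {ζ | ∀ b ∈ B,
    TensorProduct.map (LinearMap.id : V →ₗ[k] V) (Ltrans b) ζ =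
    TensorProduct.map (actV (HopfAlgebra.antipode (R := k) b)) LinearMap.id ζ}


/-!
Via `v ⊗ f ↦ (y ↦ f(y) v)`, `V ⊗ H*` embeds into `Hom_k(H, V)`. There `κ` becomes
`φ ↦ (y ↦ Σ S⁻¹(y₂) φ(y₁))`, with inverse `ψ ↦ (y ↦ Σ y₂ ψ(y₁))` because `S⁻¹` is the antipode of
the co-opposite Hopf algebra; `S(Ξ)` consists of the `φ` with `φ(S(b) y) = S(b) φ(y)` and
`Ξ ⊗ A^B` of the `ψ` with `ψ(S(b) y) = ε(b) ψ(y)`, for `b ∈ B`. Using `Δ(S b) = S(b₂) ⊗ S(b₁)` and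
`Δ(B) ⊆ B ⊗ B`, one computes `κφ(S(b) y) = Σ S⁻¹(y₂) b₁ S(b₂) φ(y₁) = ε(b) κφ(y)`, and similarly
in the other direction. Finally `κ` commutes with left convolution by associativity of `*`.
-/

open Coalgebra HopfAlgebra WithConv

lemma Coalgebra.sum_counit_right_smul {R A : Type*} [CommSemiring R] [AddCommMonoid A]
    [Module R A] [Coalgebra R A] {a : A} {κ : Type*} (r : Coalgebra.Repr R a κ) :
    ∑ i ∈ r.index, counit (R := R) (r.right i) • r.left i = a := by
  have h := congrArg (_root_.TensorProduct.rid R A) (Coalgebra.sum_tmul_counit_eq r)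
  simpa only [map_sum, _root_.TensorProduct.rid_tmul, one_smul] using h

namespace HopfAlgebra

variable {R A : Type*} [CommSemiring R] [Semiring A] [HopfAlgebra R A]

lemma sum_antipode_tmul_one_mul_comul {a : A} {κ : Type*} (r : Coalgebra.Repr R a κ) :
    ∑ i ∈ r.index, (antipode R (r.left i) ⊗ₜ[R] (1 : A)) * comul (r.right i) = 1 ⊗ₜ a := by
  set Q : A ⊗[R] (A ⊗[R] A) →ₗ[R] A ⊗[R] A :=
    (LinearMap.mul' R A ∘ₗ (antipode R).rTensor A).rTensor A ∘ₗ
      (TensorProduct.assoc R A A A).symm.toLinearMap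
  have hQ (x y : A) : (antipode R x ⊗ₜ[R] (1 : A)) * comul y = Q (x ⊗ₜ comul y) := by
    rw [← (ℛ R y).eq]
    simp [Q, Finset.mul_sum, TensorProduct.tmul_sum, Algebra.TensorProduct.tmul_mul_tmul]
  calc ∑ i ∈ r.index, (antipode R (r.left i) ⊗ₜ[R] (1 : A)) * comul (r.right i)
      = Q ((comul (R := R)).lTensor A (comul a)) := by
        rw [← r.eq, map_sum, map_sum]
        simp only [LinearMap.lTensor_tmul, hQ]
    _ = (LinearMap.mul' R A ∘ₗ (antipode R).rTensor A ∘ₗ comul).rTensor A (comul a) := by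
        rw [← coassoc_apply]
        simp [Q, LinearMap.rTensor_comp_apply]
    _ = 1 ⊗ₜ a := by
        rw [mul_antipode_rTensor_comul, LinearMap.rTensor_comp_apply, rTensor_counit_comul]
        simp

lemma comul_antipode (a : A) :
    comul (antipode R a) =
      TensorProduct.map (antipode R) (antipode R) (TensorProduct.comm R A A (comul a)) := by
  set G : A →ₗ[R] A ⊗[R] A :=
    TensorProduct.map (antipode R) (antipode R) ∘ₗ (TensorProduct.comm R A A).toLinearMap ∘ₗ comul
  set Ψ : (A ⊗[R] A) ⊗[R] A →ₗ[R] A ⊗[R] A := LinearMap.mul' R (A ⊗[R] A) ∘ₗ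
    TensorProduct.map ((TensorProduct.comm R A A).toLinearMap ∘ₗ
      TensorProduct.map (antipode R) (antipode R)) comul
  have hΨ (x z : A) : G x * comul z = Ψ (comul x ⊗ₜ z) := by
    simp only [G, Ψ, LinearMap.comp_apply, LinearEquiv.coe_coe]
    rw [← (ℛ R x).eq]
    simp [Finset.sum_mul, TensorProduct.sum_tmul]
  have hG : toConv G * toConv comul = 1 := by
    ext a
    rw [(ℛ R a).convMul_apply]
    calc ∑ i ∈ (ℛ R a).index, G ((ℛ R a).left i) * comul ((ℛ R a).right i)
        = Ψ ((TensorProduct.assoc R A A A).symm ((comul (R := R)).lTensor A (comul a))) := by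
          simp only [hΨ, ← map_sum, coassoc_symm_apply]
          simp [← (ℛ R a).eq]
      _ = ∑ i ∈ (ℛ R a).index, ((1 : A) ⊗ₜ antipode R ((ℛ R a).left i)) *
            ∑ j ∈ (ℛ R ((ℛ R a).right i)).index,
              (antipode R ((ℛ R ((ℛ R a).right i)).left j) ⊗ₜ[R] (1 : A)) *
                comul ((ℛ R ((ℛ R a).right i)).right j) := by
          conv_lhs => rw [← (ℛ R a).eq]
          simp only [map_sum, LinearMap.lTensor_tmul]
          refine Finset.sum_congr rfl fun i _ => ?_
          rw [← (ℛ R ((ℛ R a).right i)).eq]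
          simp [Ψ, TensorProduct.tmul_sum, Finset.mul_sum, ← mul_assoc,
            Algebra.TensorProduct.tmul_mul_tmul]
      _ = (1 : WithConv (A →ₗ[R] A ⊗[R] A)) a := by
          simp [sum_antipode_tmul_one_mul_comul, Algebra.TensorProduct.tmul_mul_tmul,
            ← TensorProduct.tmul_sum, sum_antipode_mul_eq_algebraMap_counit,
            Algebra.TensorProduct.one_def, Algebra.algebraMap_eq_smul_one, TensorProduct.tmul_smul]
  -- `G` is a left and `comul ∘ₗ antipode R` a right convolution inverse of `comul`.
  have := left_inv_eq_right_inv hG LinearMap.comul_right_inv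
  exact congr($this a).symm

def _root_.Coalgebra.Repr.antipode {a : A} {κ : Type*} (r : Coalgebra.Repr R a κ) :
    Coalgebra.Repr R (antipode R a) κ where
  index := r.index
  left i := HopfAlgebra.antipode R (r.right i)
  right i := HopfAlgebra.antipode R (r.left i)
  eq := by simp [comul_antipode, ← r.eq]

variable {Sinv : A →ₗ[R] A}

lemma antipode_injective_of_leftInverse (hS1 : Sinv ∘ₗ antipode R = .id) :
    Function.Injective (antipode R : A → A) :=
  Function.LeftInverse.injective (g := Sinv) fun a => LinearMap.congr_fun hS1 a

lemma map_mul_antidistrib_of_inverse_antipode (hS1 : Sinv ∘ₗ antipode R = .id)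
    (hS2 : antipode R ∘ₗ Sinv = .id) (a b : A) : Sinv (a * b) = Sinv b * Sinv a := by
  have h (x : A) : antipode R (Sinv x) = x := LinearMap.congr_fun hS2 x
  apply antipode_injective_of_leftInverse hS1
  rw [antipode_mul_antidistrib, h, h, h]

lemma mul_lTensor_comm_comul_of_inverse_antipode (hS1 : Sinv ∘ₗ antipode R = .id)
    (hS2 : antipode R ∘ₗ Sinv = .id) :
    LinearMap.mul' R A ∘ₗ Sinv.lTensor A ∘ₗ (TensorProduct.comm R A A).toLinearMap ∘ₗ comul =
      Algebra.linearMap R A ∘ₗ counit := by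
  have h (x : A) : antipode R (Sinv x) = x := LinearMap.congr_fun hS2 x
  ext a
  apply antipode_injective_of_leftInverse hS1
  simp only [LinearMap.comp_apply, LinearEquiv.coe_coe]
  rw [← (ℛ R a).eq]
  simp [map_sum, antipode_mul_antidistrib, h, sum_mul_antipode_eq_algebraMap_counit,
    Algebra.algebraMap_eq_smul_one]

lemma mul_rTensor_comm_comul_of_inverse_antipode (hS1 : Sinv ∘ₗ antipode R = .id)
    (hS2 : antipode R ∘ₗ Sinv = .id) :
    LinearMap.mul' R A ∘ₗ Sinv.rTensor A ∘ₗ (TensorProduct.comm R A A).toLinearMap ∘ₗ comul =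
      Algebra.linearMap R A ∘ₗ counit := by
  have h (x : A) : antipode R (Sinv x) = x := LinearMap.congr_fun hS2 x
  ext a
  apply antipode_injective_of_leftInverse hS1
  simp only [LinearMap.comp_apply, LinearEquiv.coe_coe]
  rw [← (ℛ R a).eq]
  simp [map_sum, antipode_mul_antidistrib, h, sum_antipode_mul_eq_algebraMap_counit,
    Algebra.algebraMap_eq_smul_one]

end HopfAlgebra

section TensorToHom

variable {R M N : Type*} [CommSemiring R] [AddCommMonoid M] [Module R M]
  [AddCommMonoid N] [Module R N]

def tensorToHom : N ⊗[R] Module.Dual R M →ₗ[R] M →ₗ[R] N :=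
  dualTensorHom R M N ∘ₗ (TensorProduct.comm R N (Module.Dual R M)).toLinearMap

@[simp] lemma tensorToHom_tmul (n : N) (f : Module.Dual R M) (m : M) :
    tensorToHom (n ⊗ₜ f) m = f m • n := rfl

lemma tensorToHom_map_left {N' : Type*} [AddCommMonoid N'] [Module R N'] (g : N →ₗ[R] N')
    (ζ : N ⊗[R] Module.Dual R M) :
    tensorToHom (TensorProduct.map g LinearMap.id ζ) = g ∘ₗ tensorToHom ζ := by
  induction ζ using TensorProduct.induction_on with
  | zero => simp
  | add ζ₁ ζ₂ h₁ h₂ => simp only [map_add, h₁, h₂, LinearMap.comp_add]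
  | tmul n f => ext m; simp

lemma tensorToHom_map_dualMap {M' : Type*} [AddCommMonoid M'] [Module R M'] (L : M' →ₗ[R] M)
    (ζ : N ⊗[R] Module.Dual R M) :
    tensorToHom (TensorProduct.map LinearMap.id L.dualMap ζ) = tensorToHom ζ ∘ₗ L := by
  induction ζ using TensorProduct.induction_on with
  | zero => simp
  | add ζ₁ ζ₂ h₁ h₂ => simp only [map_add, h₁, h₂, LinearMap.add_comp]
  | tmul n f => ext m; simp

variable {ι : Type*} [Fintype ι]

def homToTensor (b : Module.Basis ι R N) (φ : M →ₗ[R] N) : N ⊗[R] Module.Dual R M :=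
  ∑ i, b i ⊗ₜ (b.coord i ∘ₗ φ)

lemma homToTensor_tensorToHom (b : Module.Basis ι R N) (ζ : N ⊗[R] Module.Dual R M) :
    homToTensor b (tensorToHom ζ) = ζ := by
  induction ζ using TensorProduct.induction_on with
  | zero => simp [homToTensor]
  | add ζ₁ ζ₂ h₁ h₂ =>
    simp only [homToTensor, map_add, LinearMap.comp_add, TensorProduct.tmul_add,
      Finset.sum_add_distrib] at h₁ h₂ ⊢
    rw [h₁, h₂]
  | tmul n f =>
    have h (i : ι) : b.coord i ∘ₗ tensorToHom (n ⊗ₜ f) = b.repr n i • f := by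
      ext; simp [mul_comm]
    simp only [homToTensor, h, ← TensorProduct.smul_tmul, ← TensorProduct.sum_tmul, b.sum_repr]

lemma tensorToHom_injective (b : Module.Basis ι R N) :
    Function.Injective (tensorToHom : N ⊗[R] Module.Dual R M → M →ₗ[R] N) :=
  Function.LeftInverse.injective (homToTensor_tensorToHom b)

lemma mem_range_map_subtype_iff (b : Module.Basis ι R N) (A : Submodule R (Module.Dual R M))
    (η : N ⊗[R] Module.Dual R M) :
    η ∈ LinearMap.range (TensorProduct.map LinearMap.id A.subtype) ↔
      ∀ i, b.coord i ∘ₗ tensorToHom η ∈ A := by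
  constructor
  · rintro ⟨ξ, rfl⟩ i
    induction ξ using TensorProduct.induction_on with
    | zero => simp
    | add ξ₁ ξ₂ h₁ h₂ => simpa [LinearMap.comp_add] using A.add_mem h₁ h₂
    | tmul n f =>
      convert A.smul_mem (b.repr n i) f.2 using 1
      ext; simp [mul_comm]
  · intro h
    rw [← homToTensor_tensorToHom b η]
    exact Submodule.sum_mem _ fun i _ => ⟨b i ⊗ₜ ⟨_, h i⟩, rfl⟩

end TensorToHom

section

omit [SMulCommClass k H V]

lemma conv_assoc (f g h : H →ₗ[k] k) : conv (conv f g) h = conv f (conv g h) :=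
  congrArg ofConv (mul_assoc (toConv f) (toConv g) (toConv h))

lemma conv_counit (f : H →ₗ[k] k) : conv f counit = f :=
  congrArg ofConv (mul_one (toConv f))

lemma conv_apply_of_repr (f g : H →ₗ[k] k) {y : H} {κ : Type*} (r : Coalgebra.Repr k y κ) :
    conv f g y = ∑ i ∈ r.index, f (r.left i) * g (r.right i) :=
  r.convMul_apply (toConv f) (toConv g)

lemma coeffL_mul (b : Module.Basis ι k V) (v : V) (j : ι) (x y : H) :
    coeffL b j v (x * y) = ∑ i, coeffL b i v y * coeffL b j (b i) x := by
  calc b.repr ((x * y) • v) j = b.repr (x • ∑ i, b.repr (y • v) i • b i) j := by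
        rw [b.sum_repr, mul_smul]
    _ = ∑ i, b.repr (y • v) i * b.repr (x • b i) j := by
        simp only [Finset.smul_sum, smul_comm x (b.repr (y • v) _), map_sum, map_smul,
          Finsupp.coe_finsetSum, Finset.sum_apply, Finsupp.smul_apply, smul_eq_mul]

lemma kap_tmul (b : Module.Basis ι k V) (T : H →ₗ[k] H) (v : V) (f : H →ₗ[k] k) :
    kap b T (v ⊗ₜ f) = ∑ i, b i ⊗ₜ conv f (coeffL b i v ∘ₗ T) := by
  simp [kap, coact, TensorProduct.sum_tmul, convBilS]

lemma sum_conv_coeffL {T T' : H →ₗ[k] H}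
    (hT : LinearMap.mul' k H ∘ₗ TensorProduct.map T' T ∘ₗ
      (TensorProduct.comm k H H).toLinearMap ∘ₗ comul = Algebra.linearMap k H ∘ₗ counit)
    (b : Module.Basis ι k V) (v : V) (j : ι) :
    ∑ i, conv (coeffL b i v ∘ₗ T) (coeffL b j (b i) ∘ₗ T') = b.repr v j • counit := by
  ext y
  have hy := LinearMap.congr_fun hT y
  simp only [LinearMap.comp_apply, LinearEquiv.coe_coe, ← (ℛ k y).eq, map_sum,
    TensorProduct.comm_tmul, TensorProduct.map_tmul, LinearMap.mul'_apply] at hy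
  calc (∑ i, conv (coeffL b i v ∘ₗ T) (coeffL b j (b i) ∘ₗ T')) y
      = coeffL b j v (∑ p ∈ (ℛ k y).index, T' ((ℛ k y).right p) * T ((ℛ k y).left p)) := by
        simp only [LinearMap.sum_apply, conv_apply_of_repr _ _ (ℛ k y),
          map_sum, coeffL_mul, LinearMap.comp_apply]
        exact Finset.sum_comm
    _ = (b.repr v j • counit) y := by
        rw [hy]
        simp [Algebra.algebraMap_eq_smul_one, coeffL, mul_comm]

lemma kap_kap {T T' : H →ₗ[k] H}
    (hT : LinearMap.mul' k H ∘ₗ TensorProduct.map T' T ∘ₗ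
      (TensorProduct.comm k H H).toLinearMap ∘ₗ comul = Algebra.linearMap k H ∘ₗ counit)
    (b : Module.Basis ι k V) (ζ : V ⊗[k] (H →ₗ[k] k)) :
    kap b T' (kap b T ζ) = ζ := by
  induction ζ using TensorProduct.induction_on with
  | zero => simp
  | add ζ₁ ζ₂ h₁ h₂ => rw [map_add, map_add, h₁, h₂]
  | tmul v f =>
    calc kap b T' (kap b T (v ⊗ₜ f))
        = ∑ j, b j ⊗ₜ conv f (∑ i, conv (coeffL b i v ∘ₗ T) (coeffL b j (b i) ∘ₗ T')) := by
          simp only [kap_tmul, map_sum, conv_assoc]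
          rw [Finset.sum_comm]
          refine Finset.sum_congr rfl fun j _ => ?_
          rw [← TensorProduct.tmul_sum]
          exact congrArg _ (map_sum (convL f) _ _).symm
      _ = ∑ j, b j ⊗ₜ (b.repr v j • f) := by
          simp only [sum_conv_coeffL hT, conv_smul_right, conv_counit]
      _ = v ⊗ₜ f := by
          simp only [← TensorProduct.smul_tmul, ← TensorProduct.sum_tmul, b.sum_repr]

lemma kap_map_convL (b : Module.Basis ι k V) (T : H →ₗ[k] H) (f : H →ₗ[k] k)
    (ζ : V ⊗[k] (H →ₗ[k] k)) :
    kap b T (TensorProduct.map LinearMap.id (convL f) ζ) =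
      TensorProduct.map LinearMap.id (convL f) (kap b T ζ) := by
  induction ζ using TensorProduct.induction_on with
  | zero => simp
  | add ζ₁ ζ₂ h₁ h₂ => rw [map_add, map_add, map_add, map_add, h₁, h₂]
  | tmul v g => simp [kap_tmul, convL, conv_assoc]

lemma Ltrans_eq_dualMap (c : H) :
    Ltrans c = (LinearMap.mulLeft k (HopfAlgebra.antipode k c)).dualMap := rfl

lemma tensorToHom_kap_apply (b : Module.Basis ι k V) (T : H →ₗ[k] H) (ζ : V ⊗[k] (H →ₗ[k] k))
    {y : H} {κ : Type*} (r : Coalgebra.Repr k y κ) :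
    tensorToHom (kap b T ζ) y = ∑ i ∈ r.index, T (r.right i) • tensorToHom ζ (r.left i) := by
  induction ζ using TensorProduct.induction_on with
  | zero => simp
  | add ζ₁ ζ₂ h₁ h₂ =>
    simp only [map_add, LinearMap.add_apply, h₁, h₂, smul_add, Finset.sum_add_distrib]
  | tmul v f =>
    simp only [kap_tmul, map_sum, LinearMap.sum_apply, tensorToHom_tmul,
      conv_apply_of_repr _ _ r, Finset.sum_smul]
    rw [Finset.sum_comm]
    refine Finset.sum_congr rfl fun p _ => ?_
    conv_rhs => rw [smul_comm, ← b.sum_repr (T (r.right p) • v), Finset.smul_sum]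
    simp only [mul_smul, LinearMap.comp_apply]
    rfl

lemma mem_SXi_iff (b : Module.Basis ι k V) (ζ : V ⊗[k] (H →ₗ[k] k)) :
    ζ ∈ SXi B ↔ ∀ c ∈ B, ∀ y : H,
      tensorToHom ζ (antipode k c * y) = antipode k c • tensorToHom ζ y := by
  simp only [SXi, Set.mem_ofPred_eq, ← (tensorToHom_injective b).eq_iff, Ltrans_eq_dualMap,
    tensorToHom_map_dualMap, tensorToHom_map_left, LinearMap.ext_iff]
  rfl

omit [Module H V] [IsScalarTower k H V] in
lemma mem_range_ABsub_iff (b : Module.Basis ι k V) (η : V ⊗[k] (H →ₗ[k] k)) :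
    η ∈ LinearMap.range (TensorProduct.map LinearMap.id (ABsub B).subtype) ↔
      ∀ c ∈ B, ∀ y : H,
        tensorToHom η (antipode k c * y) = counit (R := k) c • tensorToHom η y := by
  rw [mem_range_map_subtype_iff b]
  refine ⟨fun h c hc y => b.ext_elem fun i => ?_, fun h i c hc y => ?_⟩
  · simpa using h i c hc y
  · simp [h c hc y]

lemma exists_repr_forall_mem
    (hΔ : ∀ b ∈ B, (Coalgebra.comul b : H ⊗[k] H) ∈
      LinearMap.range (TensorProduct.map B.val.toLinearMap B.val.toLinearMap))
    {c : H} (hc : c ∈ B) :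
    ∃ r : Coalgebra.Repr k c (B × B), ∀ p, r.left p ∈ B ∧ r.right p ∈ B := by
  obtain ⟨θ, hθ⟩ := hΔ c hc
  obtain ⟨s, hs⟩ := TensorProduct.exists_finset θ
  exact ⟨⟨s, fun p => p.1, fun p => p.2, by simp [← hθ, hs]⟩, fun p => ⟨p.1.2, p.2.2⟩⟩

lemma kap_mem_range_of_mem_SXi
    (hΔ : ∀ b ∈ B, (Coalgebra.comul b : H ⊗[k] H) ∈
      LinearMap.range (TensorProduct.map B.val.toLinearMap B.val.toLinearMap))
    (b : Module.Basis ι k V) {Sinv : H →ₗ[k] H}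
    (hS1 : Sinv ∘ₗ antipode k = LinearMap.id) (hS2 : antipode k ∘ₗ Sinv = LinearMap.id)
    {ζ : V ⊗[k] (H →ₗ[k] k)} (hζ : ζ ∈ SXi B) :
    kap b Sinv ζ ∈ LinearMap.range (TensorProduct.map LinearMap.id (ABsub B).subtype) := by
  rw [mem_SXi_iff B b] at hζ
  rw [mem_range_ABsub_iff B b]
  intro c hc y
  obtain ⟨rc, hrc⟩ := exists_repr_forall_mem B hΔ hc
  have hSinv (x z : H) : Sinv (antipode k x * z) = Sinv z * x := by
    rw [map_mul_antidistrib_of_inverse_antipode hS1 hS2, ← LinearMap.comp_apply, hS1, LinearMap.id_apply]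
  set ry := ℛ k y
  set φ := tensorToHom ζ
  rw [tensorToHom_kap_apply b Sinv ζ (rc.antipode.mul ry), tensorToHom_kap_apply b Sinv ζ ry]
  calc ∑ i ∈ (rc.antipode.mul ry).index,
        Sinv ((rc.antipode.mul ry).right i) • φ ((rc.antipode.mul ry).left i)
      = ∑ p ∈ ry.index, Sinv (ry.right p) •
          (∑ q ∈ rc.index, rc.left q * antipode k (rc.right q)) • φ (ry.left p) := by
        simp only [Coalgebra.Repr.mul_index, Coalgebra.Repr.mul_left, Coalgebra.Repr.mul_right,
          Coalgebra.Repr.antipode, Finset.sum_product, hSinv, hζ _ (hrc _).2]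
        rw [Finset.sum_comm]
        simp [Finset.sum_smul, Finset.smul_sum, mul_smul]
    _ = counit (R := k) c • ∑ p ∈ ry.index, Sinv (ry.right p) • φ (ry.left p) := by
        simp [sum_mul_antipode_eq_smul, Finset.smul_sum, smul_comm (counit (R := k) c)]

lemma kap_id_mem_SXi_of_mem_range
    (hΔ : ∀ b ∈ B, (Coalgebra.comul b : H ⊗[k] H) ∈
      LinearMap.range (TensorProduct.map B.val.toLinearMap B.val.toLinearMap))
    (b : Module.Basis ι k V) {η : V ⊗[k] (H →ₗ[k] k)}
    (hη : η ∈ LinearMap.range (TensorProduct.map LinearMap.id (ABsub B).subtype)) :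
    kap b LinearMap.id η ∈ SXi B := by
  rw [mem_range_ABsub_iff B b] at hη
  rw [mem_SXi_iff B b]
  intro c hc y
  obtain ⟨rc, hrc⟩ := exists_repr_forall_mem B hΔ hc
  set ry := ℛ k y
  set ψ := tensorToHom η
  rw [tensorToHom_kap_apply b _ η (rc.antipode.mul ry), tensorToHom_kap_apply b _ η ry]
  calc ∑ i ∈ (rc.antipode.mul ry).index,
        LinearMap.id ((rc.antipode.mul ry).right i) • ψ ((rc.antipode.mul ry).left i)
      = ∑ p ∈ ry.index, antipode k (∑ q ∈ rc.index, counit (R := k) (rc.right q) • rc.left q) •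
          ry.right p • ψ (ry.left p) := by
        simp only [Coalgebra.Repr.mul_index, Coalgebra.Repr.mul_left, Coalgebra.Repr.mul_right,
          Coalgebra.Repr.antipode, Finset.sum_product, hη _ (hrc _).2, LinearMap.id_apply]
        rw [Finset.sum_comm]
        refine Finset.sum_congr rfl fun p _ => ?_
        simp only [map_sum, map_smul, Finset.sum_smul]
        refine Finset.sum_congr rfl fun q _ => ?_
        rw [mul_smul, smul_assoc, smul_comm (ry.right p), smul_comm (antipode k _)]
    _ = antipode k c • ∑ p ∈ ry.index, LinearMap.id (ry.right p) • ψ (ry.left p) := by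
        simp [Coalgebra.sum_counit_right_smul, Finset.smul_sum]

end

theorem stmt19
    (hΔ : ∀ b ∈ B, (Coalgebra.comul b : H ⊗[k] H) ∈
      LinearMap.range (TensorProduct.map B.val.toLinearMap B.val.toLinearMap))
    (b : Module.Basis ι k V) (Sinv : H →ₗ[k] H)
    (hS1 : Sinv ∘ₗ HopfAlgebra.antipode (R := k) = LinearMap.id)
    (hS2 : HopfAlgebra.antipode (R := k) ∘ₗ Sinv = LinearMap.id) :
    Set.InjOn (kap b Sinv) (SXi B) ∧
    kap b Sinv '' (SXi B) =
      (LinearMap.range (TensorProduct.map (LinearMap.id : V →ₗ[k] V)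
        (ABsub B).subtype) : Set (V ⊗[k] (H →ₗ[k] k))) ∧
    (∀ f ∈ ABsub B, ∀ ζ ∈ SXi B,
      kap b Sinv (TensorProduct.map (LinearMap.id : V →ₗ[k] V) (convL f) ζ) =
      TensorProduct.map (LinearMap.id : V →ₗ[k] V) (convL f) (kap b Sinv ζ)) := by
  have kap_id_kap : ∀ ζ, kap b LinearMap.id (kap b Sinv ζ) = ζ :=
    kap_kap (mul_lTensor_comm_comul_of_inverse_antipode hS1 hS2) b
  have kap_kap_id : ∀ η, kap b Sinv (kap b LinearMap.id η) = η :=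
    kap_kap (mul_rTensor_comm_comul_of_inverse_antipode hS1 hS2) b
  refine ⟨fun ζ₁ _ ζ₂ _ h => ?_, Set.ext fun η => ⟨?_, fun hη => ?_⟩,
    fun f _ ζ _ => kap_map_convL b Sinv f ζ⟩
  · rw [← kap_id_kap ζ₁, h, kap_id_kap]
  · rintro ⟨ζ, hζ, rfl⟩
    exact kap_mem_range_of_mem_SXi B hΔ b hS1 hS2 hζ
  · exact ⟨_, kap_id_mem_SXi_of_mem_range B hΔ b hη, kap_kap_id η⟩

end
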